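/- Let A be an event depending on a nonnegative integer parameter, with f(m) = Pr[A] when the parameter equals m, and g(λ) = Σ_{m≥0} f(m)·Pr[Po(λ)=m] the corresponding probability when the parameter is Poisson with mean λ. Let λ₁ = λ₁(n), λ₂ = λ₂(n) be positive integers with λ₁ → ∞ and λ₂ = λ₁ + ω·λ₁^{1/2} where ω = ω(n) → ∞, and suppose g(λ₁) ~ g(λ₂). Then: if f and g are nondecreasing, f(λ₁) ≤ (1+o(1))·g(λ₂) and f(λ₂) ≥ (1+o(1))·g(λ₁); if f and g are nonincreasing, f(λ₂) ≤ (1+o(1))·g(λ₁) and f(λ₁) ≥ (1+o(1))·g(λ₂). -/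

import Mathlib

open Filter Topology Real

/-- Poisson point mass: `Pr[Po(r) = n]`. -/
noncomputable def poissonP (r : ℝ) (n : ℕ) : ℝ := Real.exp (-r) * r ^ n / n.factorial

/-- `g(λ) = ∑_{m ≥ 0} f(m) Pr[Po(λ) = m]`: the probability of the event when the
parameter is Poisson with mean `λ`, given the probabilities `f(m)` for fixed
parameter values `m`. -/
noncomputable def gP (f : ℕ → ℝ) (lam : ℝ) : ℝ := ∑' m : ℕ, f m * poissonP lam m

lemma poissonP_nonneg {r : ℝ} (hr : 0 ≤ r) (n : ℕ) : 0 ≤ poissonP r n := by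
  unfold poissonP; positivity

lemma poissonP_pos {r : ℝ} (hr : 0 < r) (n : ℕ) : 0 < poissonP r n := by
  unfold poissonP; positivity

lemma summable_poissonP (r : ℝ) : Summable (poissonP r) := by
  have := (Real.summable_pow_div_factorial r).mul_left (Real.exp (-r))
  refine this.congr fun n => ?_
  simp [poissonP, mul_div_assoc]

lemma tsum_poissonP (r : ℝ) : ∑' n, poissonP r n = 1 := by
  have h : ∑' n : ℕ, r ^ n / n.factorial = Real.exp r := by
    rw [Real.exp_eq_exp_ℝ, NormedSpace.exp_eq_tsum_div]
  calc ∑' n, poissonP r n = Real.exp (-r) * ∑' n : ℕ, r ^ n / n.factorial := by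
        rw [← tsum_mul_left]; exact tsum_congr fun n => by simp [poissonP, mul_div_assoc]
    _ = 1 := by rw [h, ← Real.exp_add]; simp

lemma summable_f_poissonP {f : ℕ → ℝ} (hf : ∀ m, f m ∈ Set.Icc (0:ℝ) 1) {r : ℝ} (hr : 0 ≤ r) :
    Summable (fun m => f m * poissonP r m) :=
  Summable.of_nonneg_of_le (fun m => mul_nonneg (hf m).1 (poissonP_nonneg hr m))
    (fun m => by
      have := poissonP_nonneg hr m
      nlinarith [(hf m).2, (hf m).1]) (summable_poissonP r)

lemma summable_ite_poissonP {r : ℝ} (hr : 0 ≤ r) (p : ℕ → Prop) [DecidablePred p] :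
    Summable (fun m => if p m then poissonP r m else 0) :=
  Summable.of_nonneg_of_le
    (fun m => by by_cases h : p m <;> simp [h, poissonP_nonneg hr])
    (fun m => by by_cases h : p m <;> simp [h, poissonP_nonneg hr]) (summable_poissonP r)

lemma gP_nonneg {f : ℕ → ℝ} (hf : ∀ m, f m ∈ Set.Icc (0:ℝ) 1) {r : ℝ} (hr : 0 ≤ r) :
    0 ≤ gP f r :=
  tsum_nonneg fun m => mul_nonneg (hf m).1 (poissonP_nonneg hr m)

lemma gP_eq_zero_forall {f : ℕ → ℝ} (hf : ∀ m, f m ∈ Set.Icc (0:ℝ) 1) {r : ℝ} (hr : 0 < r)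
    (h : gP f r = 0) (m : ℕ) : f m = 0 := by
  have hsum := summable_f_poissonP hf hr.le
  have hle : f m * poissonP r m ≤ 0 := by
    rw [← h]
    exact Summable.le_tsum hsum m fun i _ => mul_nonneg (hf i).1 (poissonP_nonneg hr.le i)
  have hp := poissonP_pos hr m
  nlinarith [(hf m).1]

lemma head_bound {r₁ r₂ C : ℝ} (hr₁ : 0 ≤ r₁) (hr₂ : 0 ≤ r₂) (hC : 0 ≤ C)
    (p : ℕ → Prop) [DecidablePred p]
    (h : ∀ m, ¬ p m → poissonP r₁ m ≤ C * poissonP r₂ m) :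
    1 - C ≤ ∑' m, (if p m then poissonP r₁ m else 0) := by
  have hA : ∑' m, (if ¬ p m then poissonP r₁ m else 0) ≤ C := by
    have : ∑' m, (if ¬ p m then poissonP r₁ m else 0) ≤ ∑' m, C * poissonP r₂ m := by
      refine Summable.tsum_le_tsum (fun m => ?_) (summable_ite_poissonP hr₁ _)
        ((summable_poissonP r₂).mul_left C)
      by_cases hm : p m
      · simp only [hm, not_true, if_false]
        exact mul_nonneg hC (poissonP_nonneg hr₂ m)
      · simpa [hm] using h m hm
    rwa [tsum_mul_left, tsum_poissonP r₂, mul_one] at this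
  have hsplit : ∑' m, (if p m then poissonP r₁ m else 0)
      + ∑' m, (if ¬ p m then poissonP r₁ m else 0) = 1 := by
    rw [← Summable.tsum_add (summable_ite_poissonP hr₁ _) (summable_ite_poissonP hr₁ _),
      ← tsum_poissonP r₁]
    exact tsum_congr fun m => by by_cases hm : p m <;> simp [hm]
  linarith

lemma gP_ge {f : ℕ → ℝ} (hf : ∀ m, f m ∈ Set.Icc (0:ℝ) 1) {r : ℝ} (hr : 0 ≤ r)
    {a : ℝ} (p : ℕ → Prop) [DecidablePred p] (hfa : ∀ m, p m → a ≤ f m) :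
    a * ∑' m, (if p m then poissonP r m else 0) ≤ gP f r := by
  rw [← tsum_mul_left]
  refine Summable.tsum_le_tsum (fun m => ?_) ((summable_ite_poissonP hr p).mul_left a)
    (summable_f_poissonP hf hr)
  by_cases hm : p m
  · simp only [hm, if_true]
    exact mul_le_mul_of_nonneg_right (hfa m hm) (poissonP_nonneg hr m)
  · simp only [hm, if_false, mul_zero]
    exact mul_nonneg (hf m).1 (poissonP_nonneg hr m)

lemma gP_le_split {f : ℕ → ℝ} (hf : ∀ m, f m ∈ Set.Icc (0:ℝ) 1)
    {r r' : ℝ} (hr : 0 ≤ r) (hr' : 0 ≤ r')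
    {a C : ℝ} (ha : 0 ≤ a) (hC : 0 ≤ C) (p : ℕ → Prop) [DecidablePred p]
    (hfa : ∀ m, p m → f m ≤ a)
    (hratio : ∀ m, ¬ p m → poissonP r m ≤ C * poissonP r' m) :
    gP f r ≤ a + C * gP f r' := by
  have hS1 : Summable (fun m => if p m then a * poissonP r m else 0) := by
    refine Summable.of_nonneg_of_le (fun m => ?_) (fun m => ?_) ((summable_poissonP r).mul_left a)
    · by_cases hm : p m <;> simp [hm, mul_nonneg ha (poissonP_nonneg hr m)]
    · by_cases hm : p m <;> simp [hm, mul_nonneg ha (poissonP_nonneg hr m)]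
  have hS2 : Summable (fun m => if p m then 0 else C * (f m * poissonP r' m)) := by
    refine Summable.of_nonneg_of_le (fun m => ?_) (fun m => ?_)
      ((summable_f_poissonP hf hr').mul_left C)
    · by_cases hm : p m <;>
        simp [hm, mul_nonneg hC (mul_nonneg (hf m).1 (poissonP_nonneg hr' m))]
    · by_cases hm : p m <;>
        simp [hm, mul_nonneg hC (mul_nonneg (hf m).1 (poissonP_nonneg hr' m))]
  have key : gP f r ≤ ∑' m, ((if p m then a * poissonP r m else 0)
      + (if p m then 0 else C * (f m * poissonP r' m))) := by
    refine Summable.tsum_le_tsum (fun m => ?_) (summable_f_poissonP hf hr) (hS1.add hS2)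
    by_cases hm : p m
    · simp only [hm, if_true, add_zero]
      exact mul_le_mul_of_nonneg_right (hfa m hm) (poissonP_nonneg hr m)
    · simp only [hm, if_false, zero_add]
      calc f m * poissonP r m ≤ f m * (C * poissonP r' m) :=
            mul_le_mul_of_nonneg_left (hratio m hm) (hf m).1
        _ = C * (f m * poissonP r' m) := by ring
  rw [Summable.tsum_add hS1 hS2] at key
  have h1 : ∑' m, (if p m then a * poissonP r m else 0) ≤ a := by
    have : ∑' m, (if p m then a * poissonP r m else 0) ≤ ∑' m, a * poissonP r m := by
      refine Summable.tsum_le_tsum (fun m => ?_) hS1 ((summable_poissonP r).mul_left a)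
      by_cases hm : p m <;> simp [hm, mul_nonneg ha (poissonP_nonneg hr m)]
    rwa [tsum_mul_left, tsum_poissonP r, mul_one] at this
  have h2 : ∑' m, (if p m then 0 else C * (f m * poissonP r' m)) ≤ C * gP f r' := by
    have : ∑' m, (if p m then 0 else C * (f m * poissonP r' m))
        ≤ ∑' m, C * (f m * poissonP r' m) := by
      refine Summable.tsum_le_tsum (fun m => ?_) hS2 ((summable_f_poissonP hf hr').mul_left C)
      by_cases hm : p m <;>
        simp [hm, mul_nonneg hC (mul_nonneg (hf m).1 (poissonP_nonneg hr' m))]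
    rwa [tsum_mul_left] at this
  linarith

lemma poisson_ratio_low {k l m : ℕ} (hk : 0 < k) (hkl : k ≤ l) (hm : m ≤ k) :
    poissonP (l : ℝ) m ≤ (Real.exp ((k : ℝ) - l) * ((l : ℝ) / k) ^ k) * poissonP (k : ℝ) m := by
  have hk' : (0 : ℝ) < k := by exact_mod_cast hk
  have hl' : (0 : ℝ) < l := lt_of_lt_of_le hk' (by exact_mod_cast hkl)
  have h1 : (1 : ℝ) ≤ (l : ℝ) / k := (one_le_div hk').mpr (by exact_mod_cast hkl)
  have key : ((l : ℝ) / k) ^ m ≤ ((l : ℝ) / k) ^ k := pow_le_pow_right₀ h1 hm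
  have hpow : (l : ℝ) ^ m ≤ ((l : ℝ) / k) ^ k * (k : ℝ) ^ m := by
    have : ((l : ℝ) / k) ^ m * (k : ℝ) ^ m ≤ ((l : ℝ) / k) ^ k * (k : ℝ) ^ m :=
      mul_le_mul_of_nonneg_right key (by positivity)
    calc (l : ℝ) ^ m = ((l : ℝ) / k * k) ^ m := by rw [div_mul_cancel₀]; exact ne_of_gt hk'
      _ = ((l : ℝ) / k) ^ m * (k : ℝ) ^ m := mul_pow _ _ _
      _ ≤ _ := this
  unfold poissonP
  rw [← mul_div_assoc, div_le_div_iff₀ (by positivity) (by positivity)]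
  have hexp : Real.exp ((k : ℝ) - l) * Real.exp (-(k : ℝ)) = Real.exp (-(l : ℝ)) := by
    rw [← Real.exp_add]; ring_nf
  calc Real.exp (-(l:ℝ)) * (l:ℝ) ^ m * (m.factorial : ℝ)
      = Real.exp (-(l:ℝ)) * (m.factorial : ℝ) * (l:ℝ) ^ m := by ring
    _ ≤ Real.exp (-(l:ℝ)) * (m.factorial : ℝ) * (((l : ℝ) / k) ^ k * (k : ℝ) ^ m) :=
        mul_le_mul_of_nonneg_left hpow (by positivity)
    _ = Real.exp ((k:ℝ) - l) * ((l:ℝ)/k) ^ k * (Real.exp (-(k:ℝ)) * (k:ℝ) ^ m) * (m.factorial:ℝ) := by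
        rw [← hexp]; ring

lemma poisson_ratio_high {k l m : ℕ} (hk : 0 < k) (hkl : k ≤ l) (hm : l ≤ m) :
    poissonP (k : ℝ) m ≤ (Real.exp ((l : ℝ) - k) * ((k : ℝ) / l) ^ l) * poissonP (l : ℝ) m := by
  have hk' : (0 : ℝ) < k := by exact_mod_cast hk
  have hl' : (0 : ℝ) < l := lt_of_lt_of_le hk' (by exact_mod_cast hkl)
  have h1 : (k : ℝ) / l ≤ 1 := (div_le_one hl').mpr (by exact_mod_cast hkl)
  have key : ((k : ℝ) / l) ^ m ≤ ((k : ℝ) / l) ^ l := pow_le_pow_of_le_one (by positivity) h1 hm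
  have hpow : (k : ℝ) ^ m ≤ ((k : ℝ) / l) ^ l * (l : ℝ) ^ m := by
    have : ((k : ℝ) / l) ^ m * (l : ℝ) ^ m ≤ ((k : ℝ) / l) ^ l * (l : ℝ) ^ m :=
      mul_le_mul_of_nonneg_right key (by positivity)
    calc (k : ℝ) ^ m = ((k : ℝ) / l * l) ^ m := by rw [div_mul_cancel₀]; exact ne_of_gt hl'
      _ = ((k : ℝ) / l) ^ m * (l : ℝ) ^ m := mul_pow _ _ _
      _ ≤ _ := this
  unfold poissonP
  rw [← mul_div_assoc, div_le_div_iff₀ (by positivity) (by positivity)]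
  have hexp : Real.exp ((l : ℝ) - k) * Real.exp (-(l : ℝ)) = Real.exp (-(k : ℝ)) := by
    rw [← Real.exp_add]; ring_nf
  calc Real.exp (-(k:ℝ)) * (k:ℝ) ^ m * (m.factorial : ℝ)
      = Real.exp (-(k:ℝ)) * (m.factorial : ℝ) * (k:ℝ) ^ m := by ring
    _ ≤ Real.exp (-(k:ℝ)) * (m.factorial : ℝ) * (((k : ℝ) / l) ^ l * (l : ℝ) ^ m) :=
        mul_le_mul_of_nonneg_left hpow (by positivity)
    _ = Real.exp ((l:ℝ) - k) * ((k:ℝ)/l) ^ l * (Real.exp (-(l:ℝ)) * (l:ℝ) ^ m) * (m.factorial:ℝ) := by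
        rw [← hexp]; ring

lemma log_le_two_sqrt {y : ℝ} (hy : 1 ≤ y) : Real.log y ≤ 2 * (Real.sqrt y - 1) := by
  have h0 : (0:ℝ) < y := by linarith
  have hs : 0 < Real.sqrt y := Real.sqrt_pos.mpr h0
  have h := Real.log_le_sub_one_of_pos hs
  have h2 : Real.log (Real.sqrt y) = Real.log y / 2 := Real.log_sqrt h0.le
  linarith

lemma two_sqrt_le_log {y : ℝ} (hy : 1 ≤ y) : 2 * (1 - 1 / Real.sqrt y) ≤ Real.log y := by
  have h0 : (0:ℝ) < y := by linarith
  have hs : 0 < Real.sqrt y := Real.sqrt_pos.mpr h0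
  have h := Real.log_le_sub_one_of_pos (show (0:ℝ) < 1 / Real.sqrt y by positivity)
  have h1 : Real.log (1 / Real.sqrt y) = -(Real.log y / 2) := by
    rw [one_div, Real.log_inv, Real.log_sqrt h0.le]
  linarith

lemma s_le_eps {k l : ℕ} (hk : 0 < k) (hkl : k ≤ l) :
    Real.exp ((k:ℝ) - l) * ((l:ℝ)/k) ^ k
      ≤ Real.exp (-(Real.sqrt l - Real.sqrt k)^2) := by
  have hk' : (0:ℝ) < k := by exact_mod_cast hk
  have hl' : (0:ℝ) < l := lt_of_lt_of_le hk' (by exact_mod_cast hkl)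
  have hkl' : (k:ℝ) ≤ l := by exact_mod_cast hkl
  set a := Real.sqrt k with ha
  set b := Real.sqrt l with hb
  have ha0 : 0 < a := Real.sqrt_pos.mpr hk'
  have hb0 : 0 < b := Real.sqrt_pos.mpr hl'
  have haa : a * a = (k:ℝ) := Real.mul_self_sqrt hk'.le
  have hbb : b * b = (l:ℝ) := Real.mul_self_sqrt hl'.le
  have hrw : ((l:ℝ)/k) ^ k = Real.exp ((k:ℝ) * Real.log ((l:ℝ)/k)) := by
    rw [← Real.log_pow, Real.exp_log (by positivity)]
  rw [hrw, ← Real.exp_add, Real.exp_le_exp]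
  have hlog : Real.log ((l:ℝ)/k) ≤ 2 * (Real.sqrt ((l:ℝ)/k) - 1) :=
    log_le_two_sqrt ((one_le_div hk').mpr hkl')
  have hsq : Real.sqrt ((l:ℝ)/k) = b / a := Real.sqrt_div hl'.le _
  have hab : (k:ℝ) * (b / a) = a * b := by
    rw [← haa]; field_simp
  have : (k:ℝ) * Real.log ((l:ℝ)/k) ≤ 2 * (a * b) - 2 * k := by
    have := mul_le_mul_of_nonneg_left hlog hk'.le
    rw [hsq] at this
    nlinarith [hab]
  nlinarith [haa, hbb]

lemma t_le_eps {k l : ℕ} (hk : 0 < k) (hkl : k ≤ l) :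
    Real.exp ((l:ℝ) - k) * ((k:ℝ)/l) ^ l
      ≤ Real.exp (-(Real.sqrt l - Real.sqrt k)^2) := by
  have hk' : (0:ℝ) < k := by exact_mod_cast hk
  have hl' : (0:ℝ) < l := lt_of_lt_of_le hk' (by exact_mod_cast hkl)
  have hkl' : (k:ℝ) ≤ l := by exact_mod_cast hkl
  set a := Real.sqrt k with ha
  set b := Real.sqrt l with hb
  have ha0 : 0 < a := Real.sqrt_pos.mpr hk'
  have hb0 : 0 < b := Real.sqrt_pos.mpr hl'
  have haa : a * a = (k:ℝ) := Real.mul_self_sqrt hk'.le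
  have hbb : b * b = (l:ℝ) := Real.mul_self_sqrt hl'.le
  have hrw : ((k:ℝ)/l) ^ l = Real.exp ((l:ℝ) * Real.log ((k:ℝ)/l)) := by
    rw [← Real.log_pow, Real.exp_log (by positivity)]
  rw [hrw, ← Real.exp_add, Real.exp_le_exp]
  have hloginv : Real.log ((k:ℝ)/l) = - Real.log ((l:ℝ)/k) := by
    rw [← Real.log_inv, inv_div]
  have hlog : 2 * (1 - 1 / Real.sqrt ((l:ℝ)/k)) ≤ Real.log ((l:ℝ)/k) :=
    two_sqrt_le_log ((one_le_div hk').mpr hkl')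
  have hsq : Real.sqrt ((l:ℝ)/k) = b / a := Real.sqrt_div hl'.le _
  have hinv : 1 / (b / a) = a / b := one_div_div _ _
  have hab : (l:ℝ) * (a / b) = a * b := by
    rw [← hbb]; field_simp
  have : (l:ℝ) * Real.log ((k:ℝ)/l) ≤ 2 * (a * b) - 2 * l := by
    rw [hloginv]
    have h2 := mul_le_mul_of_nonneg_left hlog hl'.le
    rw [hsq, hinv] at h2
    nlinarith [hab]
  nlinarith [haa, hbb]

lemma sqrt_tendsto_atTop {f : ℕ → ℝ} (h : Tendsto f atTop atTop) :
    Tendsto (fun n => Real.sqrt (f n)) atTop atTop := by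
  rw [tendsto_atTop] at *
  intro C
  filter_upwards [h (C ^ 2 ⊔ 0)] with n hn
  exact Real.le_sqrt_of_sq_le (le_trans (le_max_left _ _) hn)

lemma eps_tendsto (lam1 lam2 : ℕ → ℕ) (h1pos : ∀ n, 0 < lam1 n) (h2pos : ∀ n, 0 < lam2 n)
    (hgap : Tendsto (fun n : ℕ => ((lam2 n : ℝ) - lam1 n) / Real.sqrt (lam1 n)) atTop atTop) :
    Tendsto (fun n => Real.exp (-(Real.sqrt (lam2 n) - Real.sqrt (lam1 n)) ^ 2))
      atTop (𝓝 0) := by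
  set d : ℕ → ℝ := fun n => ((lam2 n : ℝ) - lam1 n) with hd
  set vk : ℕ → ℝ := fun n => Real.sqrt (lam1 n) with hvk
  set vl : ℕ → ℝ := fun n => Real.sqrt (lam2 n) with hvl
  have hvkpos : ∀ n, 0 < vk n := fun n =>
    Real.sqrt_pos.mpr (by exact_mod_cast h1pos n)
  have hvlpos : ∀ n, 0 < vl n := fun n =>
    Real.sqrt_pos.mpr (by exact_mod_cast h2pos n)
  have hvk1 : ∀ n, 1 ≤ vk n := fun n => by
    rw [hvk]
    rw [show (1:ℝ) = Real.sqrt 1 by simp]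
    exact Real.sqrt_le_sqrt (by exact_mod_cast h1pos n)
  have hid : ∀ n, vl n - vk n = d n / (vk n + vl n) := by
    intro n
    rw [eq_div_iff (add_pos (hvkpos n) (hvlpos n)).ne']
    have h1 : vk n * vk n = (lam1 n : ℝ) := Real.mul_self_sqrt (by positivity)
    have h2 : vl n * vl n = (lam2 n : ℝ) := Real.mul_self_sqrt (by positivity)
    simp only [hd]; nlinarith
  have hdpos : ∀ᶠ n in atTop, 0 < d n := by
    filter_upwards [hgap.eventually_ge_atTop 1] with n hn
    by_contra hneg
    push_neg at hneg
    have : d n / vk n ≤ 0 := div_nonpos_of_nonpos_of_nonneg hneg (hvkpos n).le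
    have : (1:ℝ) ≤ d n / vk n := hn
    linarith
  have hd_inf : Tendsto d atTop atTop := by
    refine tendsto_atTop_mono' atTop ?_ hgap
    filter_upwards [hdpos] with n hn
    calc d n / vk n ≤ d n / 1 :=
          div_le_div_of_nonneg_left hn.le one_pos (hvk1 n)
      _ = d n := div_one _
  have hsd : Tendsto (fun n => Real.sqrt (d n)) atTop atTop := sqrt_tendsto_atTop hd_inf
  have h1 : Tendsto (fun n => vk n / d n) atTop (𝓝 0) := by
    have := hgap.inv_tendsto_atTop
    refine this.congr fun n => ?_
    rw [Pi.inv_apply, inv_div]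
  have h2 : Tendsto (fun n => 1 / Real.sqrt (d n)) atTop (𝓝 0) := by
    have := hsd.inv_tendsto_atTop
    refine this.congr fun n => ?_
    rw [Pi.inv_apply, one_div]
  set w : ℕ → ℝ := fun n => (vk n + vl n) / d n with hw
  have hw0 : Tendsto w atTop (𝓝 0) := by
    have hbound : ∀ᶠ n in atTop, w n ≤ 2 * (vk n / d n) + 1 / Real.sqrt (d n) := by
      filter_upwards [hdpos] with n hn
      have hvl_le : vl n ≤ vk n + Real.sqrt (d n) := by
        have hcast : (lam2 n : ℝ) = (lam1 n : ℝ) + d n := by simp [hd]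
        have : vl n = Real.sqrt ((lam1 n : ℝ) + d n) := by rw [hvl]; simp only; rw [hcast]
        rw [this]
        have h1n : (0:ℝ) ≤ (lam1 n : ℝ) := by positivity
        nlinarith [Real.sq_sqrt h1n, Real.sq_sqrt hn.le, Real.sqrt_nonneg ((lam1 n : ℝ)),
          Real.sqrt_nonneg (d n), Real.sq_sqrt (by positivity : (0:ℝ) ≤ (lam1 n : ℝ) + d n),
          Real.sqrt_nonneg ((lam1 n : ℝ) + d n),
          mul_nonneg (Real.sqrt_nonneg ((lam1 n:ℝ))) (Real.sqrt_nonneg (d n))]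
      have hsdd : Real.sqrt (d n) / d n = 1 / Real.sqrt (d n) := Real.sqrt_div_self'
      calc w n = vk n / d n + vl n / d n := by rw [hw]; ring
        _ ≤ vk n / d n + (vk n + Real.sqrt (d n)) / d n := by gcongr
        _ = 2 * (vk n / d n) + Real.sqrt (d n) / d n := by ring
        _ = 2 * (vk n / d n) + 1 / Real.sqrt (d n) := by rw [hsdd]
    have hnonneg : ∀ᶠ n in atTop, 0 ≤ w n := by
      filter_upwards [hdpos] with n hn
      have := add_pos (hvkpos n) (hvlpos n)
      positivity
    have hlim : Tendsto (fun n => 2 * (vk n / d n) + 1 / Real.sqrt (d n)) atTop (𝓝 0) := by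
      have := (h1.const_mul 2).add h2
      simpa using this
    exact squeeze_zero' hnonneg hbound hlim
  have hwpos : ∀ᶠ n in atTop, 0 < w n := by
    filter_upwards [hdpos] with n hn
    exact div_pos (add_pos (hvkpos n) (hvlpos n)) hn
  have hv_inf : Tendsto (fun n => vl n - vk n) atTop atTop := by
    have hinv : Tendsto (fun n => (w n)⁻¹) atTop atTop := by
      apply Tendsto.inv_tendsto_nhdsGT_zero
      rw [tendsto_nhdsWithin_iff]
      exact ⟨hw0, hwpos.mono fun n hn => hn⟩
    refine hinv.congr fun n => ?_
    rw [hw]; simp only; rw [inv_div, ← hid n]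
  have hsqt : Tendsto (fun n => (vl n - vk n) ^ 2) atTop atTop := by
    have := hv_inf.atTop_mul_atTop₀ hv_inf
    refine this.congr fun n => ?_
    ring
  exact Real.tendsto_exp_atBot.comp (tendsto_neg_atTop_atBot.comp hsqt)

/-- Lemma `poissonfixed`: let `f : ℕ → [0,1]`, and let
`λ₁ = λ₁(n), λ₂ = λ₂(n)` be positive integers with `λ₁ → ∞` and
`λ₂ = λ₁ + ω√λ₁` with `ω = ω(n) → ∞`, and suppose `g(λ₁) ∼ g(λ₂)`.  Then:
if `f` (and hence `g`) is nondecreasing, `f(λ₁) ≤ (1+o(1)) g(λ₂)` and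
`f(λ₂) ≥ (1+o(1)) g(λ₁)`; if `f` (and hence `g`) is nonincreasing,
`f(λ₂) ≤ (1+o(1)) g(λ₁)` and `f(λ₁) ≥ (1+o(1)) g(λ₂)`. -/
theorem poisson_vs_fixed (f : ℕ → ℝ) (hf : ∀ m, f m ∈ Set.Icc (0 : ℝ) 1)
    (lam1 lam2 : ℕ → ℕ) (h1pos : ∀ n, 0 < lam1 n) (h2pos : ∀ n, 0 < lam2 n)
    (h1 : Tendsto lam1 atTop atTop)
    (hgap : Tendsto (fun n : ℕ => ((lam2 n : ℝ) - lam1 n) / Real.sqrt (lam1 n))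
      atTop atTop)
    (hg : Tendsto (fun n : ℕ => gP f (lam1 n) / gP f (lam2 n)) atTop (𝓝 1)) :
    (Monotone f → MonotoneOn (gP f) (Set.Ici (0 : ℝ)) →
      (∃ c : ℕ → ℝ, Tendsto c atTop (𝓝 0) ∧
        ∀ n, f (lam1 n) ≤ (1 + c n) * gP f (lam2 n)) ∧
      (∃ c : ℕ → ℝ, Tendsto c atTop (𝓝 0) ∧
        ∀ n, (1 + c n) * gP f (lam1 n) ≤ f (lam2 n))) ∧
    (Antitone f → AntitoneOn (gP f) (Set.Ici (0 : ℝ)) →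
      (∃ c : ℕ → ℝ, Tendsto c atTop (𝓝 0) ∧
        ∀ n, f (lam2 n) ≤ (1 + c n) * gP f (lam1 n)) ∧
      (∃ c : ℕ → ℝ, Tendsto c atTop (𝓝 0) ∧
        ∀ n, (1 + c n) * gP f (lam2 n) ≤ f (lam1 n))) := by
  set ε : ℕ → ℝ := fun n => Real.exp (-(Real.sqrt (lam2 n) - Real.sqrt (lam1 n)) ^ 2) with hε
  have hε0 : Tendsto ε atTop (𝓝 0) := eps_tendsto lam1 lam2 h1pos h2pos hgap
  have hεnn : ∀ n, 0 ≤ ε n := fun n => (Real.exp_pos _).le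
  -- eventual facts
  have E1 : ∀ᶠ n in atTop, lam1 n ≤ lam2 n := by
    filter_upwards [hgap.eventually_ge_atTop 1] with n hn
    have hvk : (0:ℝ) < Real.sqrt (lam1 n) := Real.sqrt_pos.mpr (by exact_mod_cast h1pos n)
    have : (0:ℝ) < ((lam2 n : ℝ) - lam1 n) / Real.sqrt (lam1 n) := by linarith
    have hd : (0:ℝ) < (lam2 n : ℝ) - lam1 n := by
      by_contra hc
      push_neg at hc
      have := div_nonpos_of_nonpos_of_nonneg hc hvk.le
      linarith
    have : (lam1 n : ℝ) ≤ (lam2 n : ℝ) := by linarith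
    exact_mod_cast this
  have E2 : ∀ᶠ n in atTop, ε n < 1/2 := hε0.eventually (eventually_lt_nhds (by norm_num))
  have E3 : ∀ᶠ n in atTop, gP f (lam1 n) ≤ 2 * gP f (lam2 n)
      ∧ gP f (lam2 n) ≤ 2 * gP f (lam1 n) := by
    filter_upwards [hg.eventually (Ioo_mem_nhds (show (1:ℝ)/2 < 1 by norm_num)
      (show (1:ℝ) < 2 by norm_num))] with n hn
    obtain ⟨hlo, hhi⟩ := hn
    have hg2nn : 0 ≤ gP f (lam2 n) := gP_nonneg hf (Nat.cast_nonneg _)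
    have hg2pos : 0 < gP f (lam2 n) := by
      rcases hg2nn.lt_or_eq with h | h
      · exact h
      · exfalso; rw [← h] at hlo; simp [div_zero] at hlo; linarith [hlo]
    constructor
    · have := (div_lt_iff₀ hg2pos).mp hhi
      linarith
    · have := (lt_div_iff₀ hg2pos).mp hlo
      linarith
  obtain ⟨N, hN⟩ := eventually_atTop.mp (E1.and (E2.and E3))
  -- limits of the correction sequences
  have htail1 : Tendsto (fun n => (1 - ε n)⁻¹ - 1) atTop (𝓝 0) := by
    have h1' : Tendsto (fun n => 1 - ε n) atTop (𝓝 1) := by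
      have := (tendsto_const_nhds (x := (1:ℝ))).sub hε0
      simpa using this
    have := (h1'.inv₀ (by norm_num)).sub_const 1
    simpa using this
  have htail2 : Tendsto (fun n => -(2 * ε n)) atTop (𝓝 0) := by
    have := (hε0.const_mul 2).neg
    simpa using this
  constructor
  · intro hmono _
    constructor
    · -- f(lam1 n) ≤ (1 + c n) gP f (lam2 n)
      refine ⟨fun n => if n < N then f (lam1 n) / gP f (lam2 n) - 1 else (1 - ε n)⁻¹ - 1,
        ?_, ?_⟩
      · refine htail1.congr' ?_
        filter_upwards [eventually_ge_atTop N] with n hn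
        rw [if_neg (not_lt.mpr hn)]
      · intro n
        dsimp only
        by_cases hn : n < N
        · rw [if_pos hn]
          by_cases hy : gP f (lam2 n) = 0
          · have := gP_eq_zero_forall hf (show (0:ℝ) < (lam2 n : ℝ) by exact_mod_cast h2pos n)
              hy (lam1 n)
            rw [this, hy, mul_zero]
          · have : (1 + (f (lam1 n) / gP f (lam2 n) - 1)) * gP f (lam2 n) = f (lam1 n) := by
              field_simp
              ring
            rw [this]
        · rw [if_neg hn]
          obtain ⟨hkl, hε2, hg1, hg2⟩ := hN n (not_lt.mp hn)
          have hhead := head_bound (r₁ := ((lam2 n : ℕ) : ℝ)) (r₂ := ((lam1 n : ℕ) : ℝ))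
            (Nat.cast_nonneg _) (Nat.cast_nonneg _)
            (by positivity : (0:ℝ) ≤ Real.exp ((lam1 n : ℝ) - lam2 n) * ((lam2 n : ℝ)/lam1 n) ^ lam1 n)
            (fun m => lam1 n ≤ m)
            (fun m hm => poisson_ratio_low (h1pos n) hkl (le_of_lt (lt_of_not_ge hm)))
          have hge := gP_ge hf (Nat.cast_nonneg (lam2 n)) (a := f (lam1 n))
            (fun m => lam1 n ≤ m) (fun m hm => hmono hm)
          have hsle := s_le_eps (h1pos n) hkl
          have h1e : 0 < 1 - ε n := by linarith
          have hchain : f (lam1 n) * (1 - ε n) ≤ gP f (lam2 n) := by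
            have hfnn := (hf (lam1 n)).1
            calc f (lam1 n) * (1 - ε n)
                ≤ f (lam1 n) * (1 - Real.exp ((lam1 n : ℝ) - lam2 n)
                    * ((lam2 n : ℝ)/lam1 n) ^ lam1 n) := by
                  apply mul_le_mul_of_nonneg_left _ hfnn
                  have : Real.exp ((lam1 n : ℝ) - lam2 n) * ((lam2 n : ℝ)/lam1 n) ^ lam1 n
                      ≤ ε n := hsle
                  linarith
              _ ≤ f (lam1 n) * ∑' m, (if lam1 n ≤ m then poissonP (lam2 n) m else 0) :=
                  mul_le_mul_of_nonneg_left hhead hfnn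
              _ ≤ gP f (lam2 n) := hge
          have hg2nn : 0 ≤ gP f (lam2 n) := gP_nonneg hf (Nat.cast_nonneg _)
          have : (1 + ((1 - ε n)⁻¹ - 1)) * gP f (lam2 n) = gP f (lam2 n) / (1 - ε n) := by
            field_simp
            ring
          rw [this, le_div_iff₀ h1e]
          exact hchain
    · -- (1 + c n) gP f (lam1 n) ≤ f (lam2 n)
      refine ⟨fun n => if n < N then -1 else -(2 * ε n), ?_, ?_⟩
      · refine htail2.congr' ?_
        filter_upwards [eventually_ge_atTop N] with n hn
        rw [if_neg (not_lt.mpr hn)]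
      · intro n
        dsimp only
        by_cases hn : n < N
        · rw [if_pos hn]
          simp only [add_neg_cancel, zero_mul]
          exact (hf (lam2 n)).1
        · rw [if_neg hn]
          obtain ⟨hkl, hε2, hg1, hg2⟩ := hN n (not_lt.mp hn)
          have hsplit := gP_le_split hf (Nat.cast_nonneg (lam1 n)) (Nat.cast_nonneg (lam2 n))
            ((hf (lam2 n)).1)
            (by positivity : (0:ℝ) ≤ Real.exp ((lam2 n : ℝ) - lam1 n) * ((lam1 n : ℝ)/lam2 n) ^ lam2 n)
            (fun m => m ≤ lam2 n) (fun m hm => hmono hm)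
            (fun m hm => poisson_ratio_high (h1pos n) hkl (le_of_lt (lt_of_not_ge hm)))
          have htle := t_le_eps (h1pos n) hkl
          have hg2nn : 0 ≤ gP f (lam2 n) := gP_nonneg hf (Nat.cast_nonneg _)
          have step1 : Real.exp ((lam2 n : ℝ) - lam1 n) * ((lam1 n : ℝ)/lam2 n) ^ lam2 n
              * gP f (lam2 n) ≤ ε n * gP f (lam2 n) :=
            mul_le_mul_of_nonneg_right htle hg2nn
          have step2 : ε n * gP f (lam2 n) ≤ ε n * (2 * gP f (lam1 n)) :=
            mul_le_mul_of_nonneg_left hg2 (hεnn n)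
          nlinarith [hsplit, step1, step2]
  · intro hanti _
    constructor
    · -- f(lam2 n) ≤ (1 + c n) gP f (lam1 n)
      refine ⟨fun n => if n < N then f (lam2 n) / gP f (lam1 n) - 1 else (1 - ε n)⁻¹ - 1,
        ?_, ?_⟩
      · refine htail1.congr' ?_
        filter_upwards [eventually_ge_atTop N] with n hn
        rw [if_neg (not_lt.mpr hn)]
      · intro n
        dsimp only
        by_cases hn : n < N
        · rw [if_pos hn]
          by_cases hy : gP f (lam1 n) = 0
          · have := gP_eq_zero_forall hf (show (0:ℝ) < (lam1 n : ℝ) by exact_mod_cast h1pos n)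
              hy (lam2 n)
            rw [this, hy, mul_zero]
          · have : (1 + (f (lam2 n) / gP f (lam1 n) - 1)) * gP f (lam1 n) = f (lam2 n) := by
              field_simp
              ring
            rw [this]
        · rw [if_neg hn]
          obtain ⟨hkl, hε2, hg1, hg2⟩ := hN n (not_lt.mp hn)
          have hhead := head_bound (r₁ := ((lam1 n : ℕ) : ℝ)) (r₂ := ((lam2 n : ℕ) : ℝ))
            (Nat.cast_nonneg _) (Nat.cast_nonneg _)
            (by positivity : (0:ℝ) ≤ Real.exp ((lam2 n : ℝ) - lam1 n) * ((lam1 n : ℝ)/lam2 n) ^ lam2 n)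
            (fun m => m ≤ lam2 n)
            (fun m hm => poisson_ratio_high (h1pos n) hkl (le_of_lt (lt_of_not_ge hm)))
          have hge := gP_ge hf (Nat.cast_nonneg (lam1 n)) (a := f (lam2 n))
            (fun m => m ≤ lam2 n) (fun m hm => hanti hm)
          have htle := t_le_eps (h1pos n) hkl
          have h1e : 0 < 1 - ε n := by linarith
          have hchain : f (lam2 n) * (1 - ε n) ≤ gP f (lam1 n) := by
            have hfnn := (hf (lam2 n)).1
            calc f (lam2 n) * (1 - ε n)
                ≤ f (lam2 n) * (1 - Real.exp ((lam2 n : ℝ) - lam1 n)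
                    * ((lam1 n : ℝ)/lam2 n) ^ lam2 n) := by
                  apply mul_le_mul_of_nonneg_left _ hfnn
                  linarith [htle]
              _ ≤ f (lam2 n) * ∑' m, (if m ≤ lam2 n then poissonP (lam1 n) m else 0) :=
                  mul_le_mul_of_nonneg_left hhead hfnn
              _ ≤ gP f (lam1 n) := hge
          have : (1 + ((1 - ε n)⁻¹ - 1)) * gP f (lam1 n) = gP f (lam1 n) / (1 - ε n) := by
            field_simp
            ring
          rw [this, le_div_iff₀ h1e]
          exact hchain
    · -- (1 + c n) gP f (lam2 n) ≤ f (lam1 n)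
      refine ⟨fun n => if n < N then -1 else -(2 * ε n), ?_, ?_⟩
      · refine htail2.congr' ?_
        filter_upwards [eventually_ge_atTop N] with n hn
        rw [if_neg (not_lt.mpr hn)]
      · intro n
        dsimp only
        by_cases hn : n < N
        · rw [if_pos hn]
          simp only [add_neg_cancel, zero_mul]
          exact (hf (lam1 n)).1
        · rw [if_neg hn]
          obtain ⟨hkl, hε2, hg1, hg2⟩ := hN n (not_lt.mp hn)
          have hsplit := gP_le_split hf (Nat.cast_nonneg (lam2 n)) (Nat.cast_nonneg (lam1 n))
            ((hf (lam1 n)).1)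
            (by positivity : (0:ℝ) ≤ Real.exp ((lam1 n : ℝ) - lam2 n) * ((lam2 n : ℝ)/lam1 n) ^ lam1 n)
            (fun m => lam1 n ≤ m) (fun m hm => hanti hm)
            (fun m hm => poisson_ratio_low (h1pos n) hkl (le_of_lt (lt_of_not_ge hm)))
          have hsle := s_le_eps (h1pos n) hkl
          have hg1nn : 0 ≤ gP f (lam1 n) := gP_nonneg hf (Nat.cast_nonneg _)
          have step1 : Real.exp ((lam1 n : ℝ) - lam2 n) * ((lam2 n : ℝ)/lam1 n) ^ lam1 n
              * gP f (lam1 n) ≤ ε n * gP f (lam1 n) :=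
            mul_le_mul_of_nonneg_right hsle hg1nn
          have step2 : ε n * gP f (lam1 n) ≤ ε n * (2 * gP f (lam2 n)) :=
            mul_le_mul_of_nonneg_left hg1 (hεnn n)
          nlinarith [hsplit, step1, step2]
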